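/- arXiv:2509.05579 — 10 statements merged into one kernel-verified Lean document; each statement's English description precedes it below -/
import Mathlib

section
/- Let v₁, v₂, v₃ ∈ ℝ⁴ and for 1 ≤ i, j ≤ 3 write a_{ij} for the i-th coordinate of v_j. Suppose a₁₁ = a₂₂ = a₃₃ = 2, a_{ij} < 0 whenever i ≠ j, and a₁₂·a₂₁ ≥ 4. Then v₁, v₂, v₃ are linearly independent in ℝ⁴. -/
/-- Three vectors in ℝ⁴ whose first three coordinates form a matrix with diagonal 2, negative
off-diagonal entries and `a₁₂ * a₂₁ ≥ 4` are linearly independent.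
Here `a i j` is the `i`-th coordinate of `v j`. -/
theorem stmt_3 (v₁ v₂ v₃ : Fin 4 → ℝ)
    (h11 : v₁ 0 = 2) (h22 : v₂ 1 = 2) (h33 : v₃ 2 = 2)
    (h12 : v₂ 0 < 0) (h13 : v₃ 0 < 0)
    (h21 : v₁ 1 < 0) (h23 : v₃ 1 < 0)
    (h31 : v₁ 2 < 0) (h32 : v₂ 2 < 0)
    (h4 : 4 ≤ v₂ 0 * v₁ 1) :
    LinearIndependent ℝ ![v₁, v₂, v₃] := by
  rw [Fintype.linearIndependent_iff]
  intro g hg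
  set a := v₂ 0 with ha
  set b := v₃ 0 with hb
  set c := v₁ 1 with hc
  set d := v₃ 1 with hd
  set e := v₁ 2 with he
  set f := v₂ 2 with hf
  have E0 : g 0 * 2 + g 1 * a + g 2 * b = 0 := by
    have := congrFun hg 0
    simp [Fin.sum_univ_three, h11] at this
    linarith
  have E1 : g 0 * c + g 1 * 2 + g 2 * d = 0 := by
    have := congrFun hg 1
    simp [Fin.sum_univ_three, h22] at this
    linarith
  have E2 : g 0 * e + g 1 * f + g 2 * 2 = 0 := by
    have := congrFun hg 2
    simp [Fin.sum_univ_three, h33] at this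
    linarith
  have hdf : 0 < d * f := mul_pos_of_neg_of_neg h23 h32
  have hde : 0 < d * e := mul_pos_of_neg_of_neg h23 h31
  have hcf : 0 < c * f := mul_pos_of_neg_of_neg h21 h32
  have hbe : 0 < b * e := mul_pos_of_neg_of_neg h13 h31
  have hade : a * (d * e) < 0 := mul_neg_of_neg_of_pos h12 hde
  have hbcf : b * (c * f) < 0 := mul_neg_of_neg_of_pos h13 hcf
  have hD : 8 - 2*d*f - 2*a*c + a*d*e + b*c*f - 2*b*e < 0 := by nlinarith
  have hDne : (8 - 2*d*f - 2*a*c + a*d*e + b*c*f - 2*b*e) ≠ 0 := ne_of_lt hD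
  have hg0 : g 0 = 0 := by
    have : (8 - 2*d*f - 2*a*c + a*d*e + b*c*f - 2*b*e) * g 0 = 0 := by
      linear_combination (4 - d*f) * E0 + (b*f - 2*a) * E1 + (a*d - 2*b) * E2
    exact (mul_eq_zero.mp this).resolve_left hDne
  have hg1 : g 1 = 0 := by
    have : (8 - 2*d*f - 2*a*c + a*d*e + b*c*f - 2*b*e) * g 1 = 0 := by
      linear_combination (d*e - 2*c) * E0 + (4 - b*e) * E1 + (b*c - 2*d) * E2
    exact (mul_eq_zero.mp this).resolve_left hDne
  have hg2 : g 2 = 0 := by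
    have : (8 - 2*d*f - 2*a*c + a*d*e + b*c*f - 2*b*e) * g 2 = 0 := by
      linear_combination (c*f - 2*e) * E0 + (a*e - 2*f) * E1 + (4 - a*c) * E2
    exact (mul_eq_zero.mp this).resolve_left hDne
  intro i
  fin_cases i <;> assumption
end

section
/- Let V be a real vector space and n ≥ 3 an integer. Let α₁, α₂ : V → ℝ be linear functionals and v₁, v₂ ∈ V with α₁(v₁) = α₂(v₂) = 2, α₁(v₂) < 0, α₂(v₁) < 0, and α₁(v₂)·α₂(v₁) = 4·cos²(π/n). Let R₁ and R₂ be the projective reflections associated with (α₁, v₁) and (α₂, v₂). Then the composition R₁ ∘ R₂ has order exactly n: (R₁ ∘ R₂)^n = id_V, and (R₁ ∘ R₂)^k ≠ id_V for every integer 1 ≤ k < n. -/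
/-!
Put `T = R₁ ∘ R₂`, `a = α₁(v₂)`, `b = α₂(v₁)`. Since the Cartan matrix `[[2, a], [b, 2]]` has
determinant `4 - ab = 4 sin²(π/n) ≠ 0`, the space splits as `span {v₁, v₂} ⊕ (ker α₁ ∩ ker α₂)`.
`T` is the identity on the second summand, and on the plane it has determinant `1` and trace
`ab - 2 = 2 cos(2π/n)`, so by Cayley–Hamilton its powers are given by Chebyshev polynomials:
`T^(m+1) = U_m(c) T - U_{m-1}(c)` with `c = cos(2π/n)`. Evaluating `U_m(cos θ) sin θ = sin((m+1)θ)`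
shows that this is the identity exactly when `m + 1` is a multiple of `n`.
-/

open Polynomial Polynomial.Chebyshev Real

theorem Module.End.pow_succ_apply_eq_chebyshevU {R M : Type*} [CommRing R] [AddCommGroup M]
    [Module R M] {T : Module.End R M} {c : R} {w : M} (hw : T (T w) = (2 * c) • T w - w)
    (m : ℕ) : (T ^ (m + 1)) w = (U R m).eval c • T w - (U R (m - 1)).eval c • w := by
  induction m with
  | zero => simp
  | succ m ih =>
    have hU : U R ((m + 1 : ℕ) : ℤ) = 2 * X * U R m - U R (m - 1) := by
      push_cast; exact U_add_one R m
    rw [pow_succ', Module.End.mul_apply, ih, map_sub, map_smul, map_smul, hw, hU]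
    simp only [eval_sub, eval_mul, eval_ofNat, eval_X, Nat.cast_add, Nat.cast_one,
      add_sub_cancel_right]
    module

theorem chebyshevU_eval_cos_of_succ_mul_eq_two_pi {θ : ℝ} {m : ℕ} (hθ : sin θ ≠ 0)
    (hm : (m + 1) * θ = 2 * π) :
    (U ℝ m).eval (cos θ) = 0 ∧ (U ℝ (m - 1)).eval (cos θ) = -1 := by
  have h₀ := U_real_cos θ m
  have h₁ := U_real_cos θ (m - 1)
  push_cast at h₀ h₁
  rw [hm, sin_two_pi] at h₀
  rw [sub_add_cancel, show (m : ℝ) * θ = 2 * π - θ by linarith, sin_two_pi_sub] at h₁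
  exact ⟨(mul_eq_zero.mp h₀).resolve_right hθ, mul_right_cancel₀ hθ (by linarith)⟩

theorem chebyshevU_eval_cos_ne_of_succ_mul_lt_two_pi {θ : ℝ} {m : ℕ} (hθ : 0 < θ)
    (hsin : 0 < sin θ) (hm : (m + 1) * θ < 2 * π) (hU : (U ℝ m).eval (cos θ) = 0) :
    (U ℝ (m - 1)).eval (cos θ) ≠ -1 := by
  intro hU'
  have h₀ := U_real_cos θ m
  have h₁ := U_real_cos θ (m - 1)
  push_cast at h₀ h₁
  rw [hU, zero_mul] at h₀
  rw [hU', sub_add_cancel] at h₁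
  -- `sin` vanishes on `(0, 2π)` only at `π`
  have hπ : (m + 1) * θ = π := by
    have := (sin_eq_zero_iff_of_lt_of_lt (x := (m + 1) * θ - π) (by nlinarith) (by linarith)).mp
      (by rw [sin_sub_pi, ← h₀, neg_zero])
    linarith
  rw [show (m : ℝ) * θ = π - θ by linarith, sin_pi_sub] at h₁
  linarith

section ProjReflection

variable {K V : Type*} [Field K] [AddCommGroup V] [Module K V]

def projReflection (α : Module.Dual K V) (v : V) : Module.End K V :=
  LinearMap.id - α.smulRight v

@[simp]
theorem projReflection_apply (α : Module.Dual K V) (v x : V) :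
    projReflection α v x = x - α x • v := rfl

variable {α₁ α₂ : Module.Dual K V} {v₁ v₂ : V}

theorem projReflection_comp_apply_of_mem_ker {z : V} (h₁ : α₁ z = 0) (h₂ : α₂ z = 0) :
    (projReflection α₁ v₁ ∘ₗ projReflection α₂ v₂) z = z := by
  simp [h₁, h₂]

theorem projReflection_comp_apply_left (h₁ : α₁ v₁ = 2) :
    (projReflection α₁ v₁ ∘ₗ projReflection α₂ v₂) v₁ =
      (α₁ v₂ * α₂ v₁ - 1) • v₁ - α₂ v₁ • v₂ := by
  simp only [LinearMap.comp_apply, projReflection_apply, map_sub, map_smul, h₁]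
  module

theorem projReflection_comp_apply_right (h₂ : α₂ v₂ = 2) :
    (projReflection α₁ v₁ ∘ₗ projReflection α₂ v₂) v₂ = α₁ v₂ • v₁ - v₂ := by
  simp only [LinearMap.comp_apply, projReflection_apply, map_sub, map_smul, h₂]
  module

/-- Cayley–Hamilton for the restriction to `span {v₁, v₂}`, whose trace is `α₁ v₂ * α₂ v₁ - 2`
and whose determinant is `1`. -/
theorem projReflection_comp_apply_apply (h₁ : α₁ v₁ = 2) (h₂ : α₂ v₂ = 2) (s t : K) :
    let T := projReflection α₁ v₁ ∘ₗ projReflection α₂ v₂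
    T (T (s • v₁ + t • v₂)) = (α₁ v₂ * α₂ v₁ - 2) • T (s • v₁ + t • v₂) - (s • v₁ + t • v₂) := by
  intro T
  simp only [T, map_add, map_smul, projReflection_comp_apply_left h₁,
    projReflection_comp_apply_right h₂, map_sub]
  module

theorem exists_sub_mem_ker_of_cartan_det_ne_zero (h₁ : α₁ v₁ = 2) (h₂ : α₂ v₂ = 2)
    (hdet : α₁ v₂ * α₂ v₁ ≠ 4) (x : V) :
    ∃ s t : K, α₁ (x - (s • v₁ + t • v₂)) = 0 ∧ α₂ (x - (s • v₁ + t • v₂)) = 0 := by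
  have hΔ : 4 - α₁ v₂ * α₂ v₁ ≠ 0 := sub_ne_zero.mpr hdet.symm
  refine ⟨(2 * α₁ x - α₁ v₂ * α₂ x) / (4 - α₁ v₂ * α₂ v₁),
    (2 * α₂ x - α₂ v₁ * α₁ x) / (4 - α₁ v₂ * α₂ v₁), ?_, ?_⟩ <;>
  · simp only [map_sub, map_add, map_smul, h₁, h₂, smul_eq_mul]
    field_simp
    ring

theorem linearIndependent_pair_of_cartan_det_ne_zero (h₁ : α₁ v₁ = 2) (h₂ : α₂ v₂ = 2)
    (hdet : α₁ v₂ * α₂ v₁ ≠ 4) : LinearIndependent K ![v₁, v₂] := by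
  refine LinearIndependent.pair_iff.mpr fun s t hst => ?_
  have e₁ := congrArg α₁ hst
  have e₂ := congrArg α₂ hst
  simp only [map_add, map_smul, h₁, h₂, smul_eq_mul, map_zero] at e₁ e₂
  have hΔ : 4 - α₁ v₂ * α₂ v₁ ≠ 0 := sub_ne_zero.mpr hdet.symm
  have hs : (4 - α₁ v₂ * α₂ v₁) * s = 0 := by linear_combination 2 * e₁ - α₁ v₂ * e₂
  have ht : (4 - α₁ v₂ * α₂ v₁) * t = 0 := by linear_combination 2 * e₂ - α₂ v₁ * e₁
  exact ⟨(mul_eq_zero.mp hs).resolve_left hΔ, (mul_eq_zero.mp ht).resolve_left hΔ⟩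

theorem projReflection_comp_pow_succ_eq_id_iff (h₁ : α₁ v₁ = 2) (h₂ : α₂ v₂ = 2)
    (hdet : α₁ v₂ * α₂ v₁ ≠ 4) (ha : α₁ v₂ ≠ 0) {c : K} (hc : α₁ v₂ * α₂ v₁ - 2 = 2 * c)
    (m : ℕ) :
    (projReflection α₁ v₁ ∘ₗ projReflection α₂ v₂) ^ (m + 1) = LinearMap.id ↔
      (U K m).eval c = 0 ∧ (U K (m - 1)).eval c = -1 := by
  set T := projReflection α₁ v₁ ∘ₗ projReflection α₂ v₂
  have hpow (s t : K) := Module.End.pow_succ_apply_eq_chebyshevU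
    (hc ▸ projReflection_comp_apply_apply h₁ h₂ s t) m
  constructor
  · intro hT
    have hv₂ := hpow 0 1
    simp only [zero_smul, one_smul, zero_add, hT, LinearMap.id_apply, T,
      projReflection_comp_apply_right h₂] at hv₂
    obtain ⟨hU, hU'⟩ := LinearIndependent.pair_iff.mp
      (linearIndependent_pair_of_cartan_det_ne_zero h₁ h₂ hdet)
      ((U K m).eval c * α₁ v₂) (-(U K m).eval c - (U K (m - 1)).eval c - 1)
      (by linear_combination (norm := module) -hv₂)
    have hU₀ := (mul_eq_zero.mp hU).resolve_right ha
    exact ⟨hU₀, by linear_combination -hU' - hU₀⟩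
  · rintro ⟨hU, hU'⟩
    ext x
    obtain ⟨s, t, hs, ht⟩ := exists_sub_mem_ker_of_cartan_det_ne_zero h₁ h₂ hdet x
    have hz : (T ^ (m + 1)) (x - (s • v₁ + t • v₂)) = x - (s • v₁ + t • v₂) := by
      rw [Module.End.pow_apply]
      exact Function.iterate_fixed (projReflection_comp_apply_of_mem_ker hs ht) _
    rw [← sub_add_cancel x (s • v₁ + t • v₂), map_add, hz, hpow, hU, hU', LinearMap.id_apply]
    module

end ProjReflection

theorem stmt_5_general {V : Type*} [AddCommGroup V] [Module ℝ V]
    (n : ℕ) (hn : 3 ≤ n)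
    (α₁ α₂ : Module.Dual ℝ V) (v₁ v₂ : V)
    (h1 : α₁ v₁ = 2) (h2 : α₂ v₂ = 2)
    (hμ : α₁ v₂ * α₂ v₁ = 4 * Real.cos (Real.pi / n) ^ 2)
    (R₁ R₂ : V →ₗ[ℝ] V)
    (hR₁ : ∀ x, R₁ x = x - α₁ x • v₁) (hR₂ : ∀ x, R₂ x = x - α₂ x • v₂) :
    (R₁ ∘ₗ R₂) ^ n = LinearMap.id ∧
      ∀ k : ℕ, 1 ≤ k → k < n → (R₁ ∘ₗ R₂) ^ k ≠ LinearMap.id := by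
  obtain rfl : R₁ = projReflection α₁ v₁ := LinearMap.ext hR₁
  obtain rfl : R₂ = projReflection α₂ v₂ := LinearMap.ext hR₂
  obtain ⟨m, rfl⟩ : ∃ m, n = m + 1 := ⟨n - 1, by omega⟩
  have hn' : (3 : ℝ) ≤ m + 1 := by exact_mod_cast hn
  set θ := 2 * π / (m + 1) with hθ
  have hθ₀ : 0 < θ := by positivity
  have hθπ : θ < π := by rw [hθ, div_lt_iff₀ (by linarith)]; nlinarith [pi_pos]
  have hsin : 0 < sin θ := sin_pos_of_pos_of_lt_pi hθ₀ hθπ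
  have hc : α₁ v₂ * α₂ v₁ - 2 = 2 * cos θ := by
    rw [hμ, hθ, mul_div_assoc, cos_two_mul]; push_cast; ring
  have hdisc : α₁ v₂ * α₂ v₁ * (4 - α₁ v₂ * α₂ v₁) = 4 * sin θ ^ 2 := by
    linear_combination -(α₁ v₂ * α₂ v₁ - 2 + 2 * cos θ) * hc - 4 * sin_sq_add_cos_sq θ
  have hdisc_ne : α₁ v₂ * α₂ v₁ * (4 - α₁ v₂ * α₂ v₁) ≠ 0 := by rw [hdisc]; positivity
  have hdet : α₁ v₂ * α₂ v₁ ≠ 4 := (sub_ne_zero.mp (right_ne_zero_of_mul hdisc_ne)).symm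
  have ha : α₁ v₂ ≠ 0 := left_ne_zero_of_mul (left_ne_zero_of_mul hdisc_ne)
  have horder := projReflection_comp_pow_succ_eq_id_iff h1 h2 hdet ha hc
  refine ⟨(horder m).mpr (chebyshevU_eval_cos_of_succ_mul_eq_two_pi hsin.ne' ?_), ?_⟩
  · rw [hθ]; field_simp
  · rintro k hk hkn
    obtain ⟨j, rfl⟩ : ∃ j, k = j + 1 := ⟨k - 1, by omega⟩
    rw [Ne, horder j]
    refine fun ⟨hU, hU'⟩ => chebyshevU_eval_cos_ne_of_succ_mul_lt_two_pi hθ₀ hsin ?_ hU hU'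
    have hj : (j : ℝ) + 1 < m + 1 := by exact_mod_cast hkn
    calc ((j : ℝ) + 1) * θ < (m + 1) * θ := by gcongr
      _ = 2 * π := by rw [hθ]; field_simp

/-- If two projective reflections `R₁, R₂` satisfy Vinberg's dihedral-angle condition
`α₁(v₂) * α₂(v₁) = 4 cos²(π/n)` with both `α₁(v₂), α₂(v₁)` negative, then `R₁ ∘ R₂` has
order exactly `n`. -/
theorem stmt_5 {V : Type*} [AddCommGroup V] [Module ℝ V]
    (n : ℕ) (hn : 3 ≤ n)
    (α₁ α₂ : Module.Dual ℝ V) (v₁ v₂ : V)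
    (h1 : α₁ v₁ = 2) (h2 : α₂ v₂ = 2)
    (h12 : α₁ v₂ < 0) (h21 : α₂ v₁ < 0)
    (hμ : α₁ v₂ * α₂ v₁ = 4 * Real.cos (Real.pi / n) ^ 2)
    (R₁ R₂ : V →ₗ[ℝ] V)
    (hR₁ : ∀ x, R₁ x = x - α₁ x • v₁) (hR₂ : ∀ x, R₂ x = x - α₂ x • v₂) :
    (R₁ ∘ₗ R₂) ^ n = LinearMap.id ∧
      ∀ k : ℕ, 1 ≤ k → k < n → (R₁ ∘ₗ R₂) ^ k ≠ LinearMap.id :=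
  stmt_5_general n hn α₁ α₂ v₁ v₂ h1 h2 hμ R₁ R₂ hR₁ hR₂
end

section
/- Let m be a Coxeter matrix on a finite index set I and W the associated Coxeter group with generators s_i. Let V be a real vector space and, for each i ∈ I, let α_i : V → ℝ be a linear functional and v_i ∈ V with α_i(v_i) = 2. Assume that for all i ≠ j: if m_{ij} = 2 then α_i(v_j) = 0 and α_j(v_i) = 0; if 3 ≤ m_{ij} < ∞ then α_i(v_j) < 0, α_j(v_i) < 0, and α_i(v_j)·α_j(v_i) = 4·cos²(π/m_{ij}); and if m_{ij} = ∞ no condition is imposed. Then there exists a unique group homomorphism ρ : W → GL(V) with ρ(s_i) = R_i for every i ∈ I, where R_i is the projective reflection associated with (α_i, v_i). -/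
private lemma cheb_aux (φ : ℝ) (u : ℕ → ℝ)
    (hu : ∀ n, u (n+2) = 2 * Real.cos φ * u (n+1) - u n) :
    ∀ n : ℕ, u n * Real.sin φ
      = u 1 * Real.sin ((n:ℝ)*φ) - u 0 * Real.sin (((n:ℝ)-1)*φ) := by
  have sinrec : ∀ x : ℝ, Real.sin ((x+2)*φ)
      = 2 * Real.cos φ * Real.sin ((x+1)*φ) - Real.sin (x*φ) := by
    intro x
    rw [show (x+2)*φ = (x+1)*φ + φ by ring, show x*φ = (x+1)*φ - φ by ring,
      Real.sin_add, Real.sin_sub]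
    ring
  have key : ∀ n : ℕ,
      (u n * Real.sin φ = u 1 * Real.sin ((n:ℝ)*φ) - u 0 * Real.sin (((n:ℝ)-1)*φ)) ∧
      (u (n+1) * Real.sin φ
        = u 1 * Real.sin (((n:ℝ)+1)*φ) - u 0 * Real.sin ((n:ℝ)*φ)) := by
    intro n
    induction n with
    | zero =>
      constructor
      · push_cast
        rw [show ((0:ℝ))*φ = 0 by ring, show ((0:ℝ)-1)*φ = -φ by ring,
          Real.sin_zero, Real.sin_neg]
        ring
      · push_cast
        rw [show ((0:ℝ)+1)*φ = φ by ring, show ((0:ℝ))*φ = 0 by ring, Real.sin_zero]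
        ring
    | succ k ih =>
      obtain ⟨h1, h2⟩ := ih
      constructor
      · push_cast
        rw [show ((k:ℝ)+1-1)*φ = (k:ℝ)*φ by ring]
        exact h2
      · push_cast
        have s2 := sinrec ((k:ℝ)-1)
        rw [show ((k:ℝ)-1+2)*φ = ((k:ℝ)+1)*φ by ring,
          show ((k:ℝ)-1+1)*φ = (k:ℝ)*φ by ring] at s2
        rw [show (k:ℕ)+1+1 = k+2 from rfl, hu k,
          show ((k:ℝ)+1+1)*φ = ((k:ℝ)+2)*φ by ring, sinrec (k:ℝ)]
        linear_combination (2*Real.cos φ) * h2 - h1 + u 0 * s2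
  intro n
  exact (key n).1

private lemma sum_zero (m : ℕ) (hm : 3 ≤ m) (u : ℕ → ℝ)
    (hu : ∀ n, u (n+2) = 2 * Real.cos (2*Real.pi/m) * u (n+1) - u n) :
    ∑ n ∈ Finset.range m, u n = 0 := by
  set φ := 2*Real.pi/m with hφ
  have hm0 : (0:ℝ) < m := by positivity
  have hφpos : 0 < φ := by positivity
  have hm3 : (3:ℝ) ≤ m := by exact_mod_cast hm
  have hφlt : φ < Real.pi := by
    rw [hφ, div_lt_iff₀ hm0]
    nlinarith [Real.pi_pos]
  have hsin : 0 < Real.sin φ := Real.sin_pos_of_pos_of_lt_pi hφpos hφlt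
  have hcos : Real.cos φ < 1 := by
    nlinarith [Real.sin_sq_add_cos_sq φ, Real.cos_le_one φ]
  have hmφ : (m:ℝ) * φ = 2 * Real.pi := by
    rw [hφ]; field_simp
  have hper : ∀ n : ℕ, u (n + m) = u n := by
    intro n
    have h1 := cheb_aux φ u hu (n + m)
    have h2 := cheb_aux φ u hu n
    have e1 : ((n+m:ℕ):ℝ)*φ = (n:ℝ)*φ + 2*Real.pi := by push_cast; nlinarith [hmφ]
    have e2 : (((n+m:ℕ):ℝ)-1)*φ = ((n:ℝ)-1)*φ + 2*Real.pi := by push_cast; nlinarith [hmφ]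
    rw [e1, e2, Real.sin_add_two_pi, Real.sin_add_two_pi] at h1
    exact mul_right_cancel₀ (ne_of_gt hsin) (h1.trans h2.symm)
  have gshift : ∀ f : ℕ → ℝ,
      ∑ n ∈ Finset.range m, f (n+1) = ∑ n ∈ Finset.range m, f n + f m - f 0 := by
    intro f
    have h := Finset.sum_range_succ' f m
    rw [Finset.sum_range_succ f m] at h
    linarith
  have hm00 : u m = u 0 := by have := hper 0; rwa [zero_add] at this
  have hm11 : u (m+1) = u 1 := by have := hper 1; rwa [add_comm 1 m] at this
  have shift1 : ∑ n ∈ Finset.range m, u (n+1) = ∑ n ∈ Finset.range m, u n := by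
    rw [gshift u, hm00]; ring
  have shift2 : ∑ n ∈ Finset.range m, u (n+2) = ∑ n ∈ Finset.range m, u n := by
    have h := gshift (fun k => u (k+1))
    rw [hm11] at h
    calc ∑ n ∈ Finset.range m, u (n+2) = ∑ n ∈ Finset.range m, u (n+1+1) := by norm_num
      _ = ∑ n ∈ Finset.range m, u (n+1) + u 1 - u 1 := h
      _ = ∑ n ∈ Finset.range m, u n := by rw [shift1]; ring
  have expand : ∑ n ∈ Finset.range m, u (n+2)
      = 2 * Real.cos φ * ∑ n ∈ Finset.range m, u (n+1) - ∑ n ∈ Finset.range m, u n := by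
    rw [Finset.mul_sum, ← Finset.sum_sub_distrib]
    exact Finset.sum_congr rfl fun n _ => hu n
  rw [shift1, shift2] at expand
  nlinarith [expand]

private lemma key_pow {V : Type*} [AddCommGroup V] [Module ℝ V]
    (α β : Module.Dual ℝ V) (u w : V) (S T : V ≃ₗ[ℝ] V) (m : ℕ) (hm : 3 ≤ m)
    (hαu : α u = 2) (hβw : β w = 2)
    (hab : α w * β u = 4 * Real.cos (Real.pi / m) ^ 2)
    (hS : ∀ x, S x = x - α x • u) (hT : ∀ x, T x = x - β x • w) :
    (S * T) ^ m = 1 := by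
  set a := α w with ha
  set b := β u with hb
  set P := S * T with hP
  have hab2 : 2 * Real.cos (2*Real.pi/m) = a * b - 2 := by
    rw [show 2*Real.pi/(m:ℝ) = 2*(Real.pi/m) by ring, Real.cos_two_mul]
    linarith [hab]
  have hPapp : ∀ x, P x = x - (α x - a * β x) • u - β x • w := by
    intro x
    show S (T x) = _
    rw [hT, hS, map_sub, map_smul, smul_eq_mul, ← ha]
    module
  refine LinearEquiv.ext fun x => ?_
  set c : ℕ → ℝ := fun n => α ((P^n) x) with hc
  set d : ℕ → ℝ := fun n => β ((P^n) x) with hd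
  have step : ∀ n, (P^(n+1)) x = (P^n) x - (c n - a * d n) • u - d n • w := by
    intro n
    rw [pow_succ']
    show P ((P^n) x) = _
    rw [hPapp]
  have crec : ∀ n, c (n+1) = -c n + a * d n := by
    intro n
    show α ((P^(n+1)) x) = _
    rw [step n, map_sub, map_sub, map_smul, map_smul, smul_eq_mul, smul_eq_mul, hαu, ← ha]
    simp only [hc, hd]
    ring
  have drec : ∀ n, d (n+1) = -d n - b * c n + a * b * d n := by
    intro n
    show β ((P^(n+1)) x) = _
    rw [step n, map_sub, map_sub, map_smul, map_smul, smul_eq_mul, smul_eq_mul, hβw, ← hb]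
    simp only [hc, hd]
    ring
  have c2 : ∀ n, c (n+2) = 2 * Real.cos (2*Real.pi/m) * c (n+1) - c n := by
    intro n
    rw [hab2]
    linear_combination crec (n+1) + a * drec n + (1 - a*b) * crec n
  have d2 : ∀ n, d (n+2) = 2 * Real.cos (2*Real.pi/m) * d (n+1) - d n := by
    intro n
    rw [hab2]
    linear_combination drec (n+1) + drec n - b * crec n
  have hc0 := sum_zero m hm c c2
  have hd0 := sum_zero m hm d d2
  have tel : ∀ k, (P^k) x
      = x - (∑ n ∈ Finset.range k, (c n - a * d n)) • u - (∑ n ∈ Finset.range k, d n) • w := by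
    intro k
    induction k with
    | zero => simp
    | succ k ih =>
      rw [step k, ih, Finset.sum_range_succ, Finset.sum_range_succ]
      module
  show (P^m) x = _
  rw [tel m]
  have hsum : ∑ n ∈ Finset.range m, (c n - a * d n) = 0 := by
    rw [Finset.sum_sub_distrib, ← Finset.mul_sum, hc0, hd0]; ring
  rw [hsum, hd0]
  simp

/-- Given a Coxeter system `(W, S)` over a finite index set and, for each index, a projective
reflection `Rᵢ x = x - αᵢ x • vᵢ` with `αᵢ (vᵢ) = 2`, satisfying Vinberg's compatibility
conditions with the Coxeter matrix (here the value `0` of a Coxeter matrix entry encodes `∞`),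
there is a unique group homomorphism `ρ : W →* GL(V)` with `ρ (sᵢ) = Rᵢ` for all `i`. -/
theorem stmt_6 {I : Type*} [Fintype I] (M : CoxeterMatrix I)
    {W : Type*} [Group W] (cs : CoxeterSystem M W)
    {V : Type*} [AddCommGroup V] [Module ℝ V]
    (α : I → Module.Dual ℝ V) (v : I → V)
    (hαv : ∀ i, α i (v i) = 2)
    (R : I → (V ≃ₗ[ℝ] V))
    (hR : ∀ i x, R i x = x - α i x • v i)
    (h2 : ∀ i j, i ≠ j → M i j = 2 → α i (v j) = 0 ∧ α j (v i) = 0)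
    (hfin : ∀ i j, i ≠ j → 3 ≤ M i j →
      α i (v j) < 0 ∧ α j (v i) < 0 ∧
        α i (v j) * α j (v i) = 4 * Real.cos (Real.pi / (M i j : ℝ)) ^ 2) :
    ∃! ρ : W →* (V ≃ₗ[ℝ] V), ∀ i, ρ (cs.simple i) = R i := by
  have lift : M.IsLiftable R := by
    intro i j
    rcases eq_or_ne i j with rfl | hij
    · rw [M.diagonal i, pow_one]
      refine LinearEquiv.ext fun x => ?_
      show R i (R i x) = (1 : V ≃ₗ[ℝ] V) x
      rw [hR, hR, map_sub, map_smul, smul_eq_mul, hαv]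
      show _ = x
      module
    · rcases lt_or_ge (M i j) 3 with h3 | h3
      · interval_cases hM : M i j
        · rw [pow_zero]
        · exact absurd hM (M.off_diagonal i j hij)
        · obtain ⟨hij0, hji0⟩ := h2 i j hij hM
          refine LinearEquiv.ext fun x => ?_
          rw [pow_two]
          show R i (R j (R i (R j x))) = (1 : V ≃ₗ[ℝ] V) x
          simp only [hR, map_sub, map_smul, smul_eq_mul, hαv, hij0, hji0]
          show _ = x
          module
      · obtain ⟨_, _, hab⟩ := hfin i j hij h3
        exact key_pow (α i) (α j) (v i) (v j) (R i) (R j) (M i j) h3 (hαv i) (hαv j)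
          hab (hR i) (hR j)
  refine ⟨cs.lift ⟨R, lift⟩, fun i => cs.lift_apply_simple lift i, ?_⟩
  intro ρ' hρ'
  exact cs.ext_simple fun i => by rw [hρ' i, cs.lift_apply_simple lift i]
end

section
/- Let n₁₂, n₂₃, n₃₄, n₁₄ be integers ≥ 3 and set μ_{ij} = 4·cos²(π/n_{ij}). Let v₁₂, v₂₃, v₁₄, v₃₄ be arbitrary negative real numbers and define the 4×4 real matrix M whose rows are (2, v₁₂, v₂₃ + μ₃₄/v₃₄ − 2, v₁₄), (μ₁₂/v₁₂, 2, v₂₃, v₁₄ + v₃₄ − 2), (μ₁₄/v₁₄ + μ₁₂/v₁₂ − 2, μ₂₃/v₂₃, 2, v₃₄), and (μ₁₄/v₁₄, v₁₂ + μ₂₃/v₂₃ − 2, μ₃₄/v₃₄, 2). Then every off-diagonal entry of M is negative, M₁₂M₂₁ = μ₁₂, M₂₃M₃₂ = μ₂₃, M₃₄M₄₃ = μ₃₄, M₁₄M₄₁ = μ₁₄, and moreover M₁₃·M₃₁ > 4 and M₂₄·M₄₂ > 4. -/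
lemma mu_pos_aux (n : ℕ) (hn : 3 ≤ n) : 0 < 4 * Real.cos (Real.pi / n) ^ 2 := by
  have hπ := Real.pi_pos
  have hn' : (0:ℝ) < n := by positivity
  have h1 : Real.pi / n < Real.pi / 2 := by
    apply div_lt_div_of_pos_left hπ (by norm_num)
    exact_mod_cast lt_of_lt_of_le (by norm_num) hn
  have h2 : (0:ℝ) < Real.pi / n := by positivity
  have hc : 0 < Real.cos (Real.pi / n) :=
    Real.cos_pos_of_mem_Ioo ⟨by linarith, h1⟩
  positivity

/-- The Cartan matrix of the concurrent-case Coxeter polytope inducing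
`D²(; n₁₂, n₂₃, n₃₄, n₁₄) × ℝ`, parametrized by negative reals `v₁₂, v₂₃, v₁₄, v₃₄`, has all
off-diagonal entries negative, realizes the prescribed values `μᵢⱼ = 4 cos²(π/nᵢⱼ)` on the four
finite edges, and automatically satisfies `M₁₃M₃₁ > 4` and `M₂₄M₄₂ > 4`. -/
theorem stmt_7 (n₁₂ n₂₃ n₃₄ n₁₄ : ℕ)
    (hn₁₂ : 3 ≤ n₁₂) (hn₂₃ : 3 ≤ n₂₃) (hn₃₄ : 3 ≤ n₃₄) (hn₁₄ : 3 ≤ n₁₄)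
    (μ₁₂ μ₂₃ μ₃₄ μ₁₄ : ℝ)
    (hμ₁₂ : μ₁₂ = 4 * Real.cos (Real.pi / n₁₂) ^ 2)
    (hμ₂₃ : μ₂₃ = 4 * Real.cos (Real.pi / n₂₃) ^ 2)
    (hμ₃₄ : μ₃₄ = 4 * Real.cos (Real.pi / n₃₄) ^ 2)
    (hμ₁₄ : μ₁₄ = 4 * Real.cos (Real.pi / n₁₄) ^ 2)
    (v₁₂ v₂₃ v₁₄ v₃₄ : ℝ)
    (hv₁₂ : v₁₂ < 0) (hv₂₃ : v₂₃ < 0) (hv₁₄ : v₁₄ < 0) (hv₃₄ : v₃₄ < 0)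
    (M : Matrix (Fin 4) (Fin 4) ℝ)
    (hM : M = !![2, v₁₂, v₂₃ + μ₃₄ / v₃₄ - 2, v₁₄;
                 μ₁₂ / v₁₂, 2, v₂₃, v₁₄ + v₃₄ - 2;
                 μ₁₄ / v₁₄ + μ₁₂ / v₁₂ - 2, μ₂₃ / v₂₃, 2, v₃₄;
                 μ₁₄ / v₁₄, v₁₂ + μ₂₃ / v₂₃ - 2, μ₃₄ / v₃₄, 2]) :
    (∀ i j, i ≠ j → M i j < 0) ∧
    M 0 1 * M 1 0 = μ₁₂ ∧ M 1 2 * M 2 1 = μ₂₃ ∧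
    M 2 3 * M 3 2 = μ₃₄ ∧ M 0 3 * M 3 0 = μ₁₄ ∧
    4 < M 0 2 * M 2 0 ∧ 4 < M 1 3 * M 3 1 := by
  have p₁₂ : 0 < μ₁₂ := hμ₁₂ ▸ mu_pos_aux _ hn₁₂
  have p₂₃ : 0 < μ₂₃ := hμ₂₃ ▸ mu_pos_aux _ hn₂₃
  have p₃₄ : 0 < μ₃₄ := hμ₃₄ ▸ mu_pos_aux _ hn₃₄
  have p₁₄ : 0 < μ₁₄ := hμ₁₄ ▸ mu_pos_aux _ hn₁₄
  have d₁₂ : μ₁₂ / v₁₂ < 0 := div_neg_of_pos_of_neg p₁₂ hv₁₂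
  have d₂₃ : μ₂₃ / v₂₃ < 0 := div_neg_of_pos_of_neg p₂₃ hv₂₃
  have d₃₄ : μ₃₄ / v₃₄ < 0 := div_neg_of_pos_of_neg p₃₄ hv₃₄
  have d₁₄ : μ₁₄ / v₁₄ < 0 := div_neg_of_pos_of_neg p₁₄ hv₁₄
  have e₁₂ : v₁₂ ≠ 0 := ne_of_lt hv₁₂
  have e₂₃ : v₂₃ ≠ 0 := ne_of_lt hv₂₃
  have e₃₄ : v₃₄ ≠ 0 := ne_of_lt hv₃₄
  have e₁₄ : v₁₄ ≠ 0 := ne_of_lt hv₁₄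
  subst hM
  refine ⟨?_, ?_, ?_, ?_, ?_, ?_, ?_⟩
  · intro i j hij
    fin_cases i <;> fin_cases j <;>
      first
        | exact absurd rfl hij
        | (simp; linarith)
  all_goals simp
  · field_simp
  · field_simp
  · field_simp
  · field_simp
  · nlinarith [mul_pos (by linarith : (0:ℝ) < -(v₂₃ + μ₃₄ / v₃₄ - 2))
      (by linarith : (0:ℝ) < -(μ₁₄ / v₁₄ + μ₁₂ / v₁₂ - 2))]
  · nlinarith [mul_pos (by linarith : (0:ℝ) < -(v₁₄ + v₃₄ - 2))
      (by linarith : (0:ℝ) < -(v₁₂ + μ₂₃ / v₂₃ - 2))]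
end

section
/- Let n₁₂, n₂₃, n₃₄, n₁₄ be integers ≥ 3, μ_{ij} = 4·cos²(π/n_{ij}), let v₁₂, v₂₃, v₁₄, v₃₄ be negative reals, and let v₄₄ ∈ ℝ. In ℝ⁴ set α₁ = e₁*, α₂ = e₂*, α₃ = e₃*, α₄ = e₁* − e₂* + e₃*, and v₁ = (2, μ₁₂/v₁₂, μ₁₄/v₁₄ + μ₁₂/v₁₂ − 2, 0), v₂ = (v₁₂, 2, μ₂₃/v₂₃, 0), v₃ = (v₂₃ + μ₃₄/v₃₄ − 2, v₂₃, 2, 0), v₄ = (v₁₄, v₁₄ + v₃₄ − 2, v₃₄, v₄₄). Let W be the Coxeter group on four generators s₁, s₂, s₃, s₄ whose Coxeter matrix has m₁₂ = n₁₂, m₂₃ = n₂₃, m₃₄ = n₃₄, m₁₄ = n₁₄, and m₁₃ = m₂₄ = ∞. Then there exists a unique group homomorphism ρ : W → GL(4, ℝ) with ρ(s_j) = R_j for j = 1, 2, 3, 4, where R_j is the projective reflection associated with (α_j, v_j). -/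
open Matrix

private lemma auxKey_mul_apply {V : Type*} [AddCommGroup V] [Module ℝ V]
    (e₁ e₂ : V ≃ₗ[ℝ] V) (x : V) : (e₁ * e₂) x = e₁ (e₂ x) := rfl

private lemma auxKey_invol {V : Type*} [AddCommGroup V] [Module ℝ V]
    (α : V →ₗ[ℝ] ℝ) (u : V) (S : V ≃ₗ[ℝ] V)
    (hS : ∀ x, S x = x - α x • u) (hau : α u = 2) : S * S = 1 := by
  ext x
  rw [auxKey_mul_apply, hS x, hS]
  simp only [_root_.map_sub, _root_.map_smul, hau, smul_eq_mul, LinearEquiv.coe_one, id_eq]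
  match_scalars <;> ring
private lemma auxKey {V : Type*} [AddCommGroup V] [Module ℝ V]
    (α β : V →ₗ[ℝ] ℝ) (u w : V) (S T : V ≃ₗ[ℝ] V)
    (hS : ∀ x, S x = x - α x • u) (hT : ∀ x, T x = x - β x • w)
    (hau : α u = 2) (hbw : β w = 2) (n : ℕ) (hn : 3 ≤ n)
    (hμ : α w * β u = 4 * Real.cos (Real.pi / n) ^ 2) :
    (S * T) ^ n = 1 := by
  set c : ℝ := α w with hc
  set c' : ℝ := β u with hc'
  set φ : ℝ := 2 * Real.pi / n with hφ
  have hn0 : (0:ℝ) < n := by exact_mod_cast Nat.lt_of_lt_of_le (by norm_num) hn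
  have hn3 : (3:ℝ) ≤ n := by exact_mod_cast hn
  have hφ0 : 0 < φ := by positivity
  have hφπ : φ < Real.pi := by
    rw [hφ, div_lt_iff₀ hn0]
    nlinarith [Real.pi_pos]
  have hsφ : Real.sin φ ≠ 0 := ne_of_gt (Real.sin_pos_of_pos_of_lt_pi hφ0 hφπ)
  have hcos : c * c' = 2 + 2 * Real.cos φ := by
    rw [hμ, show φ = 2 * (Real.pi / n) by rw [hφ]; ring, Real.cos_two_mul]; ring
  have hD : (4 : ℝ) - c * c' ≠ 0 := by
    have h1 : Real.cos φ < 1 := by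
      nlinarith [Real.sin_pos_of_pos_of_lt_pi hφ0 hφπ, Real.sin_sq_add_cos_sq φ,
        Real.neg_one_le_cos φ]
    rw [hcos]; nlinarith
  obtain ⟨p, hp⟩ : ∃ p : ℕ → ℝ, p = fun k : ℕ => Real.sin ((k : ℝ) * φ) / Real.sin φ := ⟨_, rfl⟩
  have hp0 : p 0 = 0 := by simp [hp]
  have hp1 : p 1 = 1 := by simp [hp, div_self hsφ]
  have hrec : ∀ k : ℕ, p (k + 2) = (c * c' - 2) * p (k + 1) - p k := by
    intro k
    have e2 : ((k:ℝ) + 2) * φ = ((k:ℝ) + 1) * φ + φ := by ring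
    have e0 : (k:ℝ) * φ = ((k:ℝ) + 1) * φ - φ := by ring
    simp only [hp]
    push_cast
    rw [e2, e0, Real.sin_add, Real.sin_sub, hcos]
    field_simp
    ring
  have hpn : p n = 0 := by
    have : (n:ℝ) * φ = 2 * Real.pi := by rw [hφ]; field_simp
    simp [hp, this, Real.sin_two_pi]
  have hpn1 : p (n + 1) = 1 := by
    have : ((n:ℝ) + 1) * φ = φ + 2 * Real.pi := by rw [hφ]; field_simp; ring
    simp only [hp]
    push_cast
    rw [this, Real.sin_add_two_pi, div_self hsφ]
  obtain ⟨a, ha⟩ : ∃ a : ℕ → ℝ, a = fun k => (-2 - (c * c' - 2) * p k + 2 * p (k + 1)) / (4 - c * c') := ⟨_, rfl⟩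
  obtain ⟨b, hb⟩ : ∃ b : ℕ → ℝ, b = fun k => c * (1 + p k - p (k + 1)) / (4 - c * c') := ⟨_, rfl⟩
  obtain ⟨d, hd⟩ : ∃ d : ℕ → ℝ, d = fun k => c' * (1 + (c * c' - 3) * p k - p (k + 1)) / (4 - c * c') := ⟨_, rfl⟩
  have ha1 : ∀ k, a (k + 1) = (c * c' - 1) * a k + c * d k - 1 := by
    intro k
    simp only [ha, hb, hd, show k + 1 + 1 = k + 2 from rfl, hrec k]
    field_simp
    ring
  have hb1 : ∀ k, b (k + 1) = (c * c' - 1) * b k + c * a k + c := by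
    intro k
    simp only [ha, hb, hd, show k + 1 + 1 = k + 2 from rfl, hrec k]
    field_simp
    ring
  have hd1 : ∀ k, d (k + 1) = -(c' * a k) - d k := by
    intro k
    simp only [ha, hb, hd, show k + 1 + 1 = k + 2 from rfl, hrec k]
    field_simp
    ring
  have he1 : ∀ k, a (k + 1) = -(c' * b k) - a k - 1 := by
    intro k
    simp only [ha, hb, hd, show k + 1 + 1 = k + 2 from rfl, hrec k]
    field_simp
    ring
  have ha0 : a 0 = 0 := by simp [ha, hp0, hp1]
  have hb0 : b 0 = 0 := by simp [hb, hp0, hp1]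
  have hd0 : d 0 = 0 := by simp [hd, hp0, hp1]
  have hST : ∀ y, (S * T) y = y - (α y - c * β y) • u - β y • w := by
    intro y
    rw [auxKey_mul_apply, hT y, hS]
    simp only [_root_.map_sub, _root_.map_smul, smul_eq_mul, ← hc]
    match_scalars <;> ring
  have hinv : ∀ k (x : V), ((S * T) ^ k) x
      = x + (a k * α x + b k * β x) • u + (d k * α x + a k * β x) • w := by
    intro k
    induction k with
    | zero => intro x; simp [ha0, hb0, hd0]
    | succ k ih =>
      intro x
      rw [pow_succ', auxKey_mul_apply, ih x, hST]
      simp only [_root_.map_add, _root_.map_smul, smul_eq_mul, hau, hbw, ← hc, ← hc']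
      match_scalars
      · ring
      · linear_combination (-(α x)) * ha1 k + (-(β x)) * hb1 k
      · linear_combination (-(α x)) * hd1 k + (-(β x)) * he1 k
  have han : a n = 0 := by rw [ha]; simp only [hpn, hpn1]; norm_num
  have hbn : b n = 0 := by rw [hb]; simp only [hpn, hpn1]; norm_num
  have hdn : d n = 0 := by rw [hd]; simp only [hpn, hpn1]; norm_num
  ext x
  rw [hinv n x, han, hbn, hdn]
  simp


/-- The concurrent-case representation of the Coxeter group of the orbifold
`D²(; n₁₂, n₂₃, n₃₄, n₁₄) × ℝ`: with `α₁ = e₁*, α₂ = e₂*, α₃ = e₃*, α₄ = e₁* - e₂* + e₃*`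
(the rows of `A`) and the vectors `v₁, …, v₄` given by the columns of `wM`, there is a unique
group homomorphism `ρ : W →* GL(ℝ⁴)` sending each Coxeter generator `sⱼ` to the projective
reflection `Rⱼ x = x - αⱼ(x) • vⱼ`. Here the Coxeter matrix entry `0` encodes `∞`. -/
theorem stmt_8 (n₁₂ n₂₃ n₃₄ n₁₄ : ℕ)
    (hn₁₂ : 3 ≤ n₁₂) (hn₂₃ : 3 ≤ n₂₃) (hn₃₄ : 3 ≤ n₃₄) (hn₁₄ : 3 ≤ n₁₄)
    (μ₁₂ μ₂₃ μ₃₄ μ₁₄ : ℝ)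
    (hμ₁₂ : μ₁₂ = 4 * Real.cos (Real.pi / n₁₂) ^ 2)
    (hμ₂₃ : μ₂₃ = 4 * Real.cos (Real.pi / n₂₃) ^ 2)
    (hμ₃₄ : μ₃₄ = 4 * Real.cos (Real.pi / n₃₄) ^ 2)
    (hμ₁₄ : μ₁₄ = 4 * Real.cos (Real.pi / n₁₄) ^ 2)
    (v₁₂ v₂₃ v₁₄ v₃₄ : ℝ)
    (hv₁₂ : v₁₂ < 0) (hv₂₃ : v₂₃ < 0) (hv₁₄ : v₁₄ < 0) (hv₃₄ : v₃₄ < 0)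
    (v₄₄ : ℝ)
    (A : Matrix (Fin 4) (Fin 4) ℝ)
    (hA : A = !![1, 0, 0, 0; 0, 1, 0, 0; 0, 0, 1, 0; 1, -1, 1, 0])
    (wM : Matrix (Fin 4) (Fin 4) ℝ)
    (hw : wM = !![2, v₁₂, v₂₃ + μ₃₄ / v₃₄ - 2, v₁₄;
                  μ₁₂ / v₁₂, 2, v₂₃, v₁₄ + v₃₄ - 2;
                  μ₁₄ / v₁₄ + μ₁₂ / v₁₂ - 2, μ₂₃ / v₂₃, 2, v₃₄;
                  0, 0, 0, v₄₄])
    (R : Fin 4 → ((Fin 4 → ℝ) ≃ₗ[ℝ] (Fin 4 → ℝ)))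
    (hR : ∀ j x, R j x = x - (∑ i, A j i * x i) • (wMᵀ j))
    (M : CoxeterMatrix (Fin 4))
    (hM : M.M = !![1, n₁₂, 0, n₁₄; n₁₂, 1, n₂₃, 0; 0, n₂₃, 1, n₃₄; n₁₄, 0, n₃₄, 1])
    {W : Type*} [Group W] (cs : CoxeterSystem M W) :
    ∃! ρ : W →* ((Fin 4 → ℝ) ≃ₗ[ℝ] (Fin 4 → ℝ)), ∀ j, ρ (cs.simple j) = R j := by
  have h12 : v₁₂ ≠ 0 := ne_of_lt hv₁₂
  have h23 : v₂₃ ≠ 0 := ne_of_lt hv₂₃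
  have h14 : v₁₄ ≠ 0 := ne_of_lt hv₁₄
  have h34 : v₃₄ ≠ 0 := ne_of_lt hv₃₄
  obtain ⟨αL, hαL⟩ : ∃ αL : Fin 4 → ((Fin 4 → ℝ) →ₗ[ℝ] ℝ),
      ∀ j x, αL j x = ∑ i, A j i * x i :=
    ⟨fun j => (LinearMap.proj j).comp (Matrix.mulVecLin A), fun j x => by
      simp [Matrix.mulVecLin_apply, Matrix.mulVec, dotProduct]⟩
  have hR' : ∀ j x, R j x = x - αL j x • (wMᵀ j) := fun j x => by rw [hR, hαL]
  have hwt : wMᵀ = !![2, μ₁₂ / v₁₂, μ₁₄ / v₁₄ + μ₁₂ / v₁₂ - 2, 0;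
      v₁₂, 2, μ₂₃ / v₂₃, 0;
      v₂₃ + μ₃₄ / v₃₄ - 2, v₂₃, 2, 0;
      v₁₄, v₁₄ + v₃₄ - 2, v₃₄, v₄₄] := by
    subst hw; ext i j; fin_cases i <;> fin_cases j <;> simp
  have d0 : αL 0 (wMᵀ 0) = 2 := by simp [hαL, hA, hwt, Fin.sum_univ_four]
  have d1 : αL 1 (wMᵀ 1) = 2 := by simp [hαL, hA, hwt, Fin.sum_univ_four]
  have d2 : αL 2 (wMᵀ 2) = 2 := by simp [hαL, hA, hwt, Fin.sum_univ_four]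
  have d3 : αL 3 (wMᵀ 3) = 2 := by simp [hαL, hA, hwt, Fin.sum_univ_four]; ring
  have c01 : αL 0 (wMᵀ 1) = v₁₂ := by simp [hαL, hA, hwt, Fin.sum_univ_four]
  have c10 : αL 1 (wMᵀ 0) = μ₁₂ / v₁₂ := by simp [hαL, hA, hwt, Fin.sum_univ_four]
  have c12 : αL 1 (wMᵀ 2) = v₂₃ := by simp [hαL, hA, hwt, Fin.sum_univ_four]
  have c21 : αL 2 (wMᵀ 1) = μ₂₃ / v₂₃ := by simp [hαL, hA, hwt, Fin.sum_univ_four]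
  have c23 : αL 2 (wMᵀ 3) = v₃₄ := by simp [hαL, hA, hwt, Fin.sum_univ_four]
  have c32 : αL 3 (wMᵀ 2) = μ₃₄ / v₃₄ := by simp [hαL, hA, hwt, Fin.sum_univ_four]; ring
  have c03 : αL 0 (wMᵀ 3) = v₁₄ := by simp [hαL, hA, hwt, Fin.sum_univ_four]
  have c30 : αL 3 (wMᵀ 0) = μ₁₄ / v₁₄ := by simp [hαL, hA, hwt, Fin.sum_univ_four]; ring
  have invol : ∀ j, R j * R j = 1 := by
    intro j
    fin_cases j
    · exact auxKey_invol _ _ _ (hR' 0) d0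
    · exact auxKey_invol _ _ _ (hR' 1) d1
    · exact auxKey_invol _ _ _ (hR' 2) d2
    · exact auxKey_invol _ _ _ (hR' 3) d3
  have p01 : (R 0 * R 1) ^ n₁₂ = 1 := by
    refine auxKey _ _ _ _ _ _ (hR' 0) (hR' 1) d0 d1 n₁₂ hn₁₂ ?_
    rw [c01, c10, hμ₁₂]; field_simp
  have p10 : (R 1 * R 0) ^ n₁₂ = 1 := by
    refine auxKey _ _ _ _ _ _ (hR' 1) (hR' 0) d1 d0 n₁₂ hn₁₂ ?_
    rw [c01, c10, hμ₁₂]; field_simp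
  have p12 : (R 1 * R 2) ^ n₂₃ = 1 := by
    refine auxKey _ _ _ _ _ _ (hR' 1) (hR' 2) d1 d2 n₂₃ hn₂₃ ?_
    rw [c12, c21, hμ₂₃]; field_simp
  have p21 : (R 2 * R 1) ^ n₂₃ = 1 := by
    refine auxKey _ _ _ _ _ _ (hR' 2) (hR' 1) d2 d1 n₂₃ hn₂₃ ?_
    rw [c12, c21, hμ₂₃]; field_simp
  have p23 : (R 2 * R 3) ^ n₃₄ = 1 := by
    refine auxKey _ _ _ _ _ _ (hR' 2) (hR' 3) d2 d3 n₃₄ hn₃₄ ?_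
    rw [c23, c32, hμ₃₄]; field_simp
  have p32 : (R 3 * R 2) ^ n₃₄ = 1 := by
    refine auxKey _ _ _ _ _ _ (hR' 3) (hR' 2) d3 d2 n₃₄ hn₃₄ ?_
    rw [c23, c32, hμ₃₄]; field_simp
  have p03 : (R 0 * R 3) ^ n₁₄ = 1 := by
    refine auxKey _ _ _ _ _ _ (hR' 0) (hR' 3) d0 d3 n₁₄ hn₁₄ ?_
    rw [c03, c30, hμ₁₄]; field_simp
  have p30 : (R 3 * R 0) ^ n₁₄ = 1 := by
    refine auxKey _ _ _ _ _ _ (hR' 3) (hR' 0) d3 d0 n₁₄ hn₁₄ ?_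
    rw [c03, c30, hμ₁₄]; field_simp
  have hlift : M.IsLiftable R := by
    intro i i'
    show (R i * R i') ^ (M.M i i') = 1
    rw [hM]
    fin_cases i <;> fin_cases i' <;>
      simp [invol, p01, p10, p12, p21, p23, p32, p03, p30]
  refine ⟨cs.lift ⟨R, hlift⟩, fun j => cs.lift_apply_simple hlift j, ?_⟩
  intro ρ hρ
  apply cs.ext_simple
  intro i
  rw [hρ i, cs.lift_apply_simple hlift i]
end

section
/- Let n₁₂, n₂₃, n₃₄, n₁₄ be integers ≥ 3 and μ_{ij} = 4·cos²(π/n_{ij}). Let v₁₃, v₂₃, v₂₄, v₃₄, v₄₂ be real numbers with v₂₃, v₂₄, v₃₄, v₄₂ < 0, v₁₃ ≤ −4, and v₂₄·v₄₂ ≥ 4, and let M be the 4×4 matrix with rows (2, −μ₁₂, v₁₃, −μ₁₄), (−1, 2, v₂₃, v₂₄), (−1, μ₂₃/v₂₃, 2, v₃₄), (−1, v₄₂, μ₃₄/v₃₄, 2). If v₁₃ = −4 or v₂₄·v₄₂ = 4, then det M ≠ 0. -/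
/-!
Multiplying `det M` by `v₂₃ v₃₄ > 0` clears the denominators and, after expanding, gives
`(v₁₃ + 4) v₂₃ v₃₄ (4 - v₂₄ v₄₂) - R`, where `R`, written in the nonnegative quantities
`μᵢⱼ`, `4 - μ₁₂`, `4 - μ₁₄` and `-vᵢⱼ`, is a sum of nonnegative monomials containing the
positive term `(-v₂₃) v₃₄² (-v₁₃) (2 - v₄₂)`. On the boundary the first summand vanishes, so
`det M < 0`.
-/

noncomputable def cartanMatrix (μ₁₂ μ₂₃ μ₃₄ μ₁₄ v₁₃ v₂₃ v₂₄ v₃₄ v₄₂ : ℝ) : Matrix (Fin 4) (Fin 4) ℝ :=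
  !![2, -μ₁₂, v₁₃, -μ₁₄;
     -1, 2, v₂₃, v₂₄;
     -1, μ₂₃ / v₂₃, 2, v₃₄;
     -1, v₄₂, μ₃₄ / v₃₄, 2]

/-- The polynomial `R`, in the variables `μ₁₂, μ₂₃, μ₃₄, μ₁₄, -v₁₃, -v₂₃, -v₃₄, -v₂₄, -v₄₂`. -/
def cartanRemainder (a b c d p u v w x : ℝ) : ℝ :=
  (4 - a) * c * u * v + (4 - d) * b * u * v + a * u * v * (u * v + 2 * u + 2 * w + 4)
    + a * c * u * w + b * c * d + 2 * b * c * w + b * v * p * (w + 2) + 2 * c * d * u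
    + d * u * v * (u * x + 2 * x + 4) + u * v ^ 2 * p * (x + 2) + 2 * u ^ 2 * v ^ 2 * x

theorem cartanRemainder_pos {a b c d p u v w x : ℝ} (ha : 0 ≤ a) (ha₄ : a ≤ 4) (hb : 0 ≤ b)
    (hc : 0 ≤ c) (hd : 0 ≤ d) (hd₄ : d ≤ 4) (hp : 0 < p) (hu : 0 < u) (hv : 0 < v)
    (hw : 0 < w) (hx : 0 < x) : 0 < cartanRemainder a b c d p u v w x := by
  have ha' : 0 ≤ 4 - a := sub_nonneg.2 ha₄
  have hd' : 0 ≤ 4 - d := sub_nonneg.2 hd₄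
  unfold cartanRemainder
  positivity

theorem cartanMatrix_det_mul (μ₁₂ μ₂₃ μ₃₄ μ₁₄ v₁₃ v₂₃ v₂₄ v₃₄ v₄₂ : ℝ) (h₂₃ : v₂₃ ≠ 0)
    (h₃₄ : v₃₄ ≠ 0) :
    (cartanMatrix μ₁₂ μ₂₃ μ₃₄ μ₁₄ v₁₃ v₂₃ v₂₄ v₃₄ v₄₂).det * (v₂₃ * v₃₄) =
      (v₁₃ + 4) * v₂₃ * v₃₄ * (4 - v₂₄ * v₄₂)
        - cartanRemainder μ₁₂ μ₂₃ μ₃₄ μ₁₄ (-v₁₃) (-v₂₃) (-v₃₄) (-v₂₄) (-v₄₂) := by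
  rw [cartanMatrix, Matrix.det_succ_row_zero, cartanRemainder]
  simp [Fin.sum_univ_four, Matrix.det_fin_three, Fin.succAbove]
  field_simp
  ring

theorem cartanMatrix_det_neg {μ₁₂ μ₂₃ μ₃₄ μ₁₄ v₁₃ v₂₃ v₂₄ v₃₄ v₄₂ : ℝ} (hμ₁₂ : 0 ≤ μ₁₂)
    (hμ₁₂₄ : μ₁₂ ≤ 4) (hμ₂₃ : 0 ≤ μ₂₃) (hμ₃₄ : 0 ≤ μ₃₄) (hμ₁₄ : 0 ≤ μ₁₄) (hμ₁₄₄ : μ₁₄ ≤ 4)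
    (hv₁₃ : v₁₃ < 0) (hv₂₃ : v₂₃ < 0) (hv₂₄ : v₂₄ < 0) (hv₃₄ : v₃₄ < 0) (hv₄₂ : v₄₂ < 0)
    (hbd : v₁₃ = -4 ∨ v₂₄ * v₄₂ = 4) :
    (cartanMatrix μ₁₂ μ₂₃ μ₃₄ μ₁₄ v₁₃ v₂₃ v₂₄ v₃₄ v₄₂).det < 0 := by
  have hR := cartanRemainder_pos hμ₁₂ hμ₁₂₄ hμ₂₃ hμ₃₄ hμ₁₄ hμ₁₄₄ (neg_pos.2 hv₁₃)
    (neg_pos.2 hv₂₃) (neg_pos.2 hv₃₄) (neg_pos.2 hv₂₄) (neg_pos.2 hv₄₂)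
  have hboundary : (v₁₃ + 4) * v₂₃ * v₃₄ * (4 - v₂₄ * v₄₂) = 0 := by
    rcases hbd with h | h <;> simp [h]
  have hdet := cartanMatrix_det_mul μ₁₂ μ₂₃ μ₃₄ μ₁₄ v₁₃ v₂₃ v₂₄ v₃₄ v₄₂ hv₂₃.ne hv₃₄.ne
  rw [hboundary, zero_sub] at hdet
  have hprod : 0 < v₂₃ * v₃₄ := mul_pos_of_neg_of_neg hv₂₃ hv₃₄
  exact neg_of_mul_neg_left (hdet ▸ neg_neg_of_pos hR) hprod.le

theorem stmt_9_general (n₁₂ n₂₃ n₃₄ n₁₄ : ℕ)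
    (μ₁₂ μ₂₃ μ₃₄ μ₁₄ : ℝ)
    (hμ₁₂ : μ₁₂ = 4 * Real.cos (Real.pi / n₁₂) ^ 2)
    (hμ₂₃ : μ₂₃ = 4 * Real.cos (Real.pi / n₂₃) ^ 2)
    (hμ₃₄ : μ₃₄ = 4 * Real.cos (Real.pi / n₃₄) ^ 2)
    (hμ₁₄ : μ₁₄ = 4 * Real.cos (Real.pi / n₁₄) ^ 2)
    (v₁₃ v₂₃ v₂₄ v₃₄ v₄₂ : ℝ)
    (hv₂₃ : v₂₃ < 0) (hv₂₄ : v₂₄ < 0) (hv₃₄ : v₃₄ < 0) (hv₄₂ : v₄₂ < 0)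
    (hv₁₃ : v₁₃ ≤ -4)
    (M : Matrix (Fin 4) (Fin 4) ℝ)
    (hM : M = !![2, -μ₁₂, v₁₃, -μ₁₄;
                 -1, 2, v₂₃, v₂₄;
                 -1, μ₂₃ / v₂₃, 2, v₃₄;
                 -1, v₄₂, μ₃₄ / v₃₄, 2])
    (hbd : v₁₃ = -4 ∨ v₂₄ * v₄₂ = 4) :
    M.det ≠ 0 := by
  have hμ_nonneg (x : ℝ) : 0 ≤ 4 * Real.cos x ^ 2 := by positivity
  have hμ_le (x : ℝ) : 4 * Real.cos x ^ 2 ≤ 4 := by linarith [Real.cos_sq_le_one x]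
  subst hM hμ₁₂ hμ₂₃ hμ₃₄ hμ₁₄
  exact (cartanMatrix_det_neg (hμ_nonneg _) (hμ_le _) (hμ_nonneg _) (hμ_nonneg _)
    (hμ_nonneg _) (hμ_le _) (by linarith) hv₂₃ hv₂₄ hv₃₄ hv₄₂ hbd).ne

/-- On the boundary `T₁₃ = 4` or `T₂₄ = 4` of the deformation space, the Cartan matrix of the
general-position Coxeter polytope inducing `D²(; n₁₂, n₂₃, n₃₄, n₁₄) × ℝ` is nonsingular. -/
theorem stmt_9 (n₁₂ n₂₃ n₃₄ n₁₄ : ℕ)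
    (hn₁₂ : 3 ≤ n₁₂) (hn₂₃ : 3 ≤ n₂₃) (hn₃₄ : 3 ≤ n₃₄) (hn₁₄ : 3 ≤ n₁₄)
    (μ₁₂ μ₂₃ μ₃₄ μ₁₄ : ℝ)
    (hμ₁₂ : μ₁₂ = 4 * Real.cos (Real.pi / n₁₂) ^ 2)
    (hμ₂₃ : μ₂₃ = 4 * Real.cos (Real.pi / n₂₃) ^ 2)
    (hμ₃₄ : μ₃₄ = 4 * Real.cos (Real.pi / n₃₄) ^ 2)
    (hμ₁₄ : μ₁₄ = 4 * Real.cos (Real.pi / n₁₄) ^ 2)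
    (v₁₃ v₂₃ v₂₄ v₃₄ v₄₂ : ℝ)
    (hv₂₃ : v₂₃ < 0) (hv₂₄ : v₂₄ < 0) (hv₃₄ : v₃₄ < 0) (hv₄₂ : v₄₂ < 0)
    (hv₁₃ : v₁₃ ≤ -4) (hv₂₄₄₂ : 4 ≤ v₂₄ * v₄₂)
    (M : Matrix (Fin 4) (Fin 4) ℝ)
    (hM : M = !![2, -μ₁₂, v₁₃, -μ₁₄;
                 -1, 2, v₂₃, v₂₄;
                 -1, μ₂₃ / v₂₃, 2, v₃₄;
                 -1, v₄₂, μ₃₄ / v₃₄, 2])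
    (hbd : v₁₃ = -4 ∨ v₂₄ * v₄₂ = 4) :
    M.det ≠ 0 :=
  stmt_9_general n₁₂ n₂₃ n₃₄ n₁₄ μ₁₂ μ₂₃ μ₃₄ μ₁₄ hμ₁₂ hμ₂₃ hμ₃₄ hμ₁₄ v₁₃ v₂₃ v₂₄ v₃₄ v₄₂ hv₂₃ hv₂₄
    hv₃₄ hv₄₂ hv₁₃ M hM hbd
end

section
/- Let m ≥ 1 and let α₁, …, α_m be nonzero linear functionals on ℝ², and set K = {x ∈ ℝ² : α_i(x) ≥ 0 for all i = 1, …, m}. If K has nonempty interior, then there exist indices i, j (possibly equal) such that K = {x ∈ ℝ² : α_i(x) ≥ 0 and α_j(x) ≥ 0}. -/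
/-!
A nonzero functional is an open map, so every functional is positive at an interior point `x` of
the cone, and after rescaling all of them take the value `1` at `x`. In the two-dimensional dual
these normalized functionals lie on an affine line, parametrized by their value at a vector `w`
completing `x` to a basis; the two with the smallest and largest value at `w` have all the others
on the segment between them, and a convex combination of functionals nonnegative at `y` is
nonnegative at `y`.
-/

open Module

theorem LinearMap.pos_of_mem_interior_setOf_nonneg {E : Type*} [AddCommGroup E] [Module ℝ E]
    [TopologicalSpace E] [IsTopologicalAddGroup E] [ContinuousSMul ℝ E]
    {f : Dual ℝ E} (hf : f ≠ 0) {x : E} (hx : x ∈ interior {y | 0 ≤ f y}) : 0 < f x := by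
  have hfx := (f.isOpenMap_of_finiteDimensional (LinearMap.surjective hf)).image_interior_subset _
    (Set.mem_image_of_mem f hx)
  have himage : f '' {y | 0 ≤ f y} ⊆ Set.Ici 0 := by rintro _ ⟨y, hy, rfl⟩; exact hy
  simpa using interior_mono himage hfx

section TwoDimensional

variable {E : Type*} [AddCommGroup E] [Module ℝ E] (hE : finrank ℝ E = 2)
  {ι : Type*} [Finite ι] [Nonempty ι]
include hE

theorem exists_forall_mem_segment_of_apply_eq_one {g : ι → Dual ℝ E} {x : E}
    (hg : ∀ i, g i x = 1) : ∃ i j, ∀ k, g k ∈ segment ℝ (g i) (g j) := by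
  have hx : x ≠ 0 := by
    rintro rfl
    simpa using hg (Classical.arbitrary ι)
  obtain ⟨w, hw⟩ := exists_linearIndependent_pair_of_one_lt_finrank (R := ℝ) (by omega) hx
  let b := basisOfLinearIndependentOfCardEqFinrank hw (by simp [hE])
  obtain ⟨i, hi⟩ := Finite.exists_max fun k ↦ g k w
  obtain ⟨j, hj⟩ := Finite.exists_min fun k ↦ g k w
  refine ⟨j, i, fun k ↦ ?_⟩
  obtain ⟨a, c, ha, hc, hac, hs⟩ := Icc_subset_segment ⟨hj k, hi k⟩
  refine ⟨a, c, ha, hc, hac, b.ext fun n ↦ ?_⟩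
  fin_cases n
  · simp [b, hg, hac]
  · simpa [b] using hs

theorem exists_setOf_forall_nonneg_eq {f : ι → Dual ℝ E} {x : E} (hx : ∀ i, 0 < f i x) :
    ∃ i j, {y | ∀ k, 0 ≤ f k y} = {y | 0 ≤ f i y ∧ 0 ≤ f j y} := by
  let g k := (f k x)⁻¹ • f k
  have hg k : g k x = 1 := by simp [g, (hx k).ne']
  have hscale k y : 0 ≤ g k y ↔ 0 ≤ f k y := by simp [g, hx k]
  obtain ⟨i, j, hij⟩ := exists_forall_mem_segment_of_apply_eq_one hE hg
  refine ⟨i, j, Set.ext fun y ↦ ⟨fun h ↦ ⟨h i, h j⟩, fun ⟨hi, hj⟩ k ↦ ?_⟩⟩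
  obtain ⟨a, c, ha, hc, -, hk⟩ := hij k
  rw [← hscale] at hi hj ⊢
  rw [← hk]
  simp only [LinearMap.add_apply, LinearMap.smul_apply, smul_eq_mul]
  positivity

end TwoDimensional

/-- A convex polyhedral cone in ℝ², cut out by finitely many nonzero linear functionals, with
nonempty interior is already cut out by (at most) two of the functionals. -/
theorem stmt_11 (m : ℕ) (hm : 1 ≤ m)
    (α : Fin m → Module.Dual ℝ (ℝ × ℝ))
    (hα : ∀ i, α i ≠ 0)
    (K : Set (ℝ × ℝ)) (hK : K = {x | ∀ i, 0 ≤ α i x})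
    (hint : (interior K).Nonempty) :
    ∃ i j, K = {x | 0 ≤ α i x ∧ 0 ≤ α j x} := by
  obtain ⟨x, hx⟩ := hint
  have : Nonempty (Fin m) := ⟨⟨0, hm⟩⟩
  subst hK
  have hpos i : 0 < α i x :=
    (α i).pos_of_mem_interior_setOf_nonneg (hα i)
      (interior_mono (fun y (hy : ∀ k, 0 ≤ α k y) ↦ hy i) hx)
  exact exists_setOf_forall_nonneg_eq (by simp) hpos
end

section
/- Let M and M′ be 4×4 real matrices all of whose off-diagonal entries are nonzero. Suppose M_{ij}·M_{ji} = M′_{ij}·M′_{ji} for all i ≠ j, and that M₁₂M₂₃M₃₁ = M′₁₂M′₂₃M′₃₁, M₁₂M₂₄M₄₁ = M′₁₂M′₂₄M′₄₁, and M₁₃M₃₄M₄₁ = M′₁₃M′₃₄M′₄₁. Then all cyclic invariants of M and M′ agree: for every k ∈ {2, 3, 4} and every tuple of k pairwise distinct indices i₁, …, i_k in {1, 2, 3, 4}, one has M_{i₁i₂}M_{i₂i₃}⋯M_{i_ki₁} = M′_{i₁i₂}M′_{i₂i₃}⋯M′_{i_ki₁}. -/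
/-!
Off the diagonal, write `M' i j = r i j * M i j`. The length-2 invariants say `r j i = (r i j)⁻¹`,
and the triangle invariants through vertex `0` then say `r i j = r 0 j / r 0 i`. Hence `M'` is
conjugate to `M` by the invertible diagonal matrix with entries `r 0 i`, at least off the diagonal,
and every cyclic product over distinct indices telescopes through such a conjugation.
-/

theorem List.Nodup.fst_ne_snd_of_mem_zip_rotate {α : Type*} {l : List α} {p : α × α}
    (hl : l.Nodup) (hlen : 2 ≤ l.length) (hp : p ∈ l.zip (l.rotate 1)) : p.1 ≠ p.2 := by
  obtain ⟨k, hk, rfl⟩ := List.mem_iff_getElem.mp hp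
  have hkl : k < l.length := by simpa using hk
  simp only [List.getElem_zip, List.getElem_rotate, ne_eq, hl.getElem_inj_iff]
  rcases Nat.lt_or_ge (k + 1) l.length with h | h
  · rw [Nat.mod_eq_of_lt h]; omega
  · rw [show k + 1 = l.length by omega, Nat.mod_self]; omega

namespace Matrix

variable {ι K : Type*}

def cycleProd [Monoid K] (M : Matrix ι ι K) (l : List ι) : K :=
  ((l.zip (l.rotate 1)).map fun p => M p.1 p.2).prod

theorem cycleProd_eq_of_diagonal_conj [CommMonoidWithZero K] [IsCancelMulZero K] [Nontrivial K]
    {M M' : Matrix ι ι K} (g : ι → K) (hg : ∀ i, g i ≠ 0)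
    (hconj : ∀ i j, i ≠ j → g i * M' i j = M i j * g j)
    {l : List ι} (hl : l.Nodup) (hlen : 2 ≤ l.length) :
    M'.cycleProd l = M.cycleProd l := by
  set pairs := l.zip (l.rotate 1)
  have hfst : (pairs.map fun p => g p.1).prod = (l.map g).prod := by
    rw [show (fun p : ι × ι => g p.1) = g ∘ Prod.fst from rfl, ← List.map_map,
      List.map_fst_zip (by simp)]
  have hsnd : (pairs.map fun p => g p.2).prod = (l.map g).prod := by
    rw [show (fun p : ι × ι => g p.2) = g ∘ Prod.snd from rfl, ← List.map_map,
      List.map_snd_zip (by simp), ((l.rotate_perm 1).map g).prod_eq]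
  have hg_prod : (l.map g).prod ≠ 0 := List.prod_ne_zero (by simp [hg])
  refine mul_left_cancel₀ hg_prod ?_
  calc (l.map g).prod * M'.cycleProd l
      = (pairs.map fun p => g p.1 * M' p.1 p.2).prod := by
        rw [List.prod_map_mul, hfst, cycleProd]
    _ = (pairs.map fun p => M p.1 p.2 * g p.2).prod :=
        congrArg List.prod <| List.map_congr_left fun p hp =>
          hconj _ _ (hl.fst_ne_snd_of_mem_zip_rotate hlen hp)
    _ = (l.map g).prod * M.cycleProd l := by
        rw [List.prod_map_mul, hsnd, cycleProd, mul_comm]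

theorem reverse_triangle_eq [Field K] {M M' : Matrix ι ι K} {i j k : ι}
    (hne : M i j * M j k * M k i ≠ 0)
    (hij : M i j * M j i = M' i j * M' j i) (hjk : M j k * M k j = M' j k * M' k j)
    (hki : M k i * M i k = M' k i * M' i k)
    (h : M i j * M j k * M k i = M' i j * M' j k * M' k i) :
    M i k * M k j * M j i = M' i k * M' k j * M' j i := by
  refine mul_left_cancel₀ hne ?_
  linear_combination (M j k * M k j) * (M k i * M i k) * hij
    + M' i j * M' j i * (M k i * M i k) * hjk + M' i j * M' j i * (M' j k * M' k j) * hki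
    - M' i k * M' k j * M' j i * h

theorem exists_diagonal_conj_of_triangles [Field K] [DecidableEq ι] {M M' : Matrix ι ι K}
    (o : ι) (hne : ∀ i j, i ≠ j → M i j ≠ 0) (hne' : ∀ i j, i ≠ j → M' i j ≠ 0)
    (h2 : ∀ i j, i ≠ j → M i j * M j i = M' i j * M' j i)
    (h3 : ∀ i j, i ≠ o → j ≠ o → i ≠ j → M o i * M i j * M j o = M' o i * M' i j * M' j o) :
    ∃ g : ι → K, (∀ i, g i ≠ 0) ∧ ∀ i j, i ≠ j → g i * M' i j = M i j * g j := by
  refine ⟨fun i => if i = o then 1 else M' o i / M o i, fun i => ?_, fun i j hij => ?_⟩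
  · dsimp only
    split_ifs with hi
    · exact one_ne_zero
    · exact div_ne_zero (hne' o i (Ne.symm hi)) (hne o i (Ne.symm hi))
  by_cases hi : i = o
  · subst hi
    have hij₀ := hne i j hij
    simp only [if_pos, if_neg (Ne.symm hij)]
    field_simp
  by_cases hj : j = o
  · subst hj
    have hji₀ := hne j i (Ne.symm hij)
    simp only [if_pos, if_neg hi]
    field_simp
    linear_combination -h2 j i (Ne.symm hi)
  · have hoi₀ := hne o i (Ne.symm hi)
    have hoj₀ := hne o j (Ne.symm hj)
    simp only [if_neg hi, if_neg hj]
    field_simp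
    refine mul_right_cancel₀ (hne' j o hj) ?_
    linear_combination M o i * M i j * h2 o j (Ne.symm hj) - M o j * h3 i j hi hj hij

end Matrix

/-- For 4×4 matrices with nonzero off-diagonal entries, the length-2 cyclic invariants together
with the three cyclic invariants `(1,2,3)`, `(1,2,4)`, `(1,3,4)` determine all cyclic
invariants: if they agree for `M` and `M'`, then for every list of at least two pairwise
distinct indices the cyclic products `M_{i₁i₂} M_{i₂i₃} ⋯ M_{i_k i₁}` agree. -/
theorem stmt_13 (M M' : Matrix (Fin 4) (Fin 4) ℝ)
    (hne : ∀ i j, i ≠ j → M i j ≠ 0) (hne' : ∀ i j, i ≠ j → M' i j ≠ 0)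
    (h2 : ∀ i j, i ≠ j → M i j * M j i = M' i j * M' j i)
    (h123 : M 0 1 * M 1 2 * M 2 0 = M' 0 1 * M' 1 2 * M' 2 0)
    (h124 : M 0 1 * M 1 3 * M 3 0 = M' 0 1 * M' 1 3 * M' 3 0)
    (h134 : M 0 2 * M 2 3 * M 3 0 = M' 0 2 * M' 2 3 * M' 3 0) :
    ∀ l : List (Fin 4), l.Nodup → 2 ≤ l.length →
      ((l.zip (l.rotate 1)).map (fun p => M p.1 p.2)).prod =
        ((l.zip (l.rotate 1)).map (fun p => M' p.1 p.2)).prod := by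
  have reverse {i j k : Fin 4} (hij : i ≠ j) (hjk : j ≠ k) (hki : k ≠ i) :=
    Matrix.reverse_triangle_eq (M := M) (M' := M')
      (mul_ne_zero (mul_ne_zero (hne i j hij) (hne j k hjk)) (hne k i hki))
      (h2 i j hij) (h2 j k hjk) (h2 k i hki)
  have h3 : ∀ i j : Fin 4, i ≠ 0 → j ≠ 0 → i ≠ j →
      M 0 i * M i j * M j 0 = M' 0 i * M' i j * M' j 0 := by
    have h132 := reverse (by decide) (by decide) (by decide) h123
    have h142 := reverse (by decide) (by decide) (by decide) h124
    have h143 := reverse (by decide) (by decide) (by decide) h134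
    intro i j hi hj hij
    fin_cases i <;> fin_cases j <;> first | exact absurd rfl ‹_› | assumption
  intro l hl hlen
  obtain ⟨g, hg, hconj⟩ := Matrix.exists_diagonal_conj_of_triangles 0 hne hne' h2 h3
  exact (Matrix.cycleProd_eq_of_diagonal_conj g hg hconj hl hlen).symm
end

section
/- For all negative real numbers v₁₂, v₂₃, v₁₄, v₃₄, the inequality (v₂₃ + 1/v₃₄ − 2)·(1/v₁₄ + 1/v₁₂ − 2)·(v₁₄ + v₃₄ − 2)·(v₁₂ + 1/v₂₃ − 2) ≥ 256 holds, with equality when v₁₂ = v₂₃ = v₁₄ = v₃₄ = −1. -/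
lemma aux_sq (u v w x : ℝ) (hu : 0 < u) (hv : 0 < v) (hw : 0 < w) (hx : 0 < x) :
    256 ≤ (u^2 + 1/v^2 + 2) * (1/w^2 + 1/x^2 + 2) * (w^2 + v^2 + 2) * (x^2 + 1/u^2 + 2) := by
  have hu2 : (0:ℝ) < u^2 := by positivity
  have hv2 : (0:ℝ) < v^2 := by positivity
  have hw2 : (0:ℝ) < w^2 := by positivity
  have hx2 : (0:ℝ) < x^2 := by positivity
  have h1 : (3 + x/v)^2 ≤ (u^2 + 1/v^2 + 2) * (x^2 + 1/u^2 + 2) := by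
    have key : (3*v + x)^2 * u^2 ≤ (u^2*v^2 + 1 + 2*v^2) * (u^2*x^2 + 1 + 2*u^2) := by
      nlinarith [sq_nonneg (u^2*v*x - 1), mul_nonneg hv2.le (sq_nonneg (u^2 - 1)),
        mul_nonneg hu2.le (sq_nonneg (1 - v*x)), mul_pos hu2 hv2,
        mul_pos hv2 hx2, mul_pos hu2 hx2]
    have e1 : (3 + x/v)^2 = ((3*v + x)^2 * u^2) / (v^2 * u^2) := by
      field_simp
    have e2 : (u^2 + 1/v^2 + 2) * (x^2 + 1/u^2 + 2)
        = ((u^2*v^2 + 1 + 2*v^2) * (u^2*x^2 + 1 + 2*u^2)) / (v^2 * u^2) := by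
      rw [eq_div_iff (by positivity)]; field_simp; try exact Or.inl trivial
    rw [e1, e2]
    exact (div_le_div_iff_of_pos_right (by positivity)).mpr key
  have h2 : (3 + v/x)^2 ≤ (1/w^2 + 1/x^2 + 2) * (w^2 + v^2 + 2) := by
    have key : (3*x + v)^2 * w^2 ≤ (x^2 + w^2 + 2*w^2*x^2) * (w^2 + v^2 + 2) := by
      nlinarith [sq_nonneg (x*v - w^2), mul_nonneg hx2.le (sq_nonneg (1 - w^2)),
        mul_nonneg hw2.le (sq_nonneg (1 - x*v)), mul_pos hw2 hx2,
        mul_pos hv2 hx2, mul_pos hw2 hv2]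
    have e1 : (3 + v/x)^2 = ((3*x + v)^2 * w^2) / (x^2 * w^2) := by
      field_simp
    have e2 : (1/w^2 + 1/x^2 + 2) * (w^2 + v^2 + 2)
        = ((x^2 + w^2 + 2*w^2*x^2) * (w^2 + v^2 + 2)) / (x^2 * w^2) := by
      rw [eq_div_iff (by positivity)]; field_simp; try exact Or.inl trivial
    rw [e1, e2]
    exact (div_le_div_iff_of_pos_right (by positivity)).mpr key
  have h3 : 16 ≤ (3 + x/v) * (3 + v/x) := by
    have hxv : 0 < x/v := by positivity
    have hvx : 0 < v/x := by positivity
    have : x/v * (v/x) = 1 := by field_simp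
    nlinarith [sq_nonneg (x/v - v/x), sq_nonneg (x/v + v/x - 2)]
  have hA : (0:ℝ) ≤ 3 + x/v := by positivity
  have hB : (0:ℝ) ≤ 3 + v/x := by positivity
  have h4 : 256 ≤ ((3 + x/v) * (3 + v/x))^2 := by nlinarith
  calc (256:ℝ) ≤ ((3 + x/v) * (3 + v/x))^2 := h4
    _ = (3 + x/v)^2 * (3 + v/x)^2 := by ring
    _ ≤ ((u^2 + 1/v^2 + 2) * (x^2 + 1/u^2 + 2)) * ((1/w^2 + 1/x^2 + 2) * (w^2 + v^2 + 2)) := by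
        apply mul_le_mul h1 h2 (by positivity) ?_
        positivity
    _ = (u^2 + 1/v^2 + 2) * (1/w^2 + 1/x^2 + 2) * (w^2 + v^2 + 2) * (x^2 + 1/u^2 + 2) := by ring

lemma aux_pos (a b c d : ℝ) (ha : 0 < a) (hb : 0 < b) (hc : 0 < c) (hd : 0 < d) :
    256 ≤ (a + 1/b + 2) * (1/c + 1/d + 2) * (c + b + 2) * (d + 1/a + 2) := by
  have := aux_sq (Real.sqrt a) (Real.sqrt b) (Real.sqrt c) (Real.sqrt d)
    (Real.sqrt_pos.mpr ha) (Real.sqrt_pos.mpr hb) (Real.sqrt_pos.mpr hc) (Real.sqrt_pos.mpr hd)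
  rwa [Real.sq_sqrt ha.le, Real.sq_sqrt hb.le, Real.sq_sqrt hc.le, Real.sq_sqrt hd.le] at this

/-- In the concurrent case of the orbifold `D²(; 3, 3, 3, 3) × ℝ`, the product of the two
infinite-edge Cartan invariants is at least 256, with equality when
`v₁₂ = v₂₃ = v₁₄ = v₃₄ = -1`. -/
theorem stmt_14 (v₁₂ v₂₃ v₁₄ v₃₄ : ℝ)
    (h₁₂ : v₁₂ < 0) (h₂₃ : v₂₃ < 0) (h₁₄ : v₁₄ < 0) (h₃₄ : v₃₄ < 0) :
    256 ≤ (v₂₃ + 1 / v₃₄ - 2) * (1 / v₁₄ + 1 / v₁₂ - 2) *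
        (v₁₄ + v₃₄ - 2) * (v₁₂ + 1 / v₂₃ - 2) ∧
      (v₁₂ = -1 → v₂₃ = -1 → v₁₄ = -1 → v₃₄ = -1 →
        (v₂₃ + 1 / v₃₄ - 2) * (1 / v₁₄ + 1 / v₁₂ - 2) *
          (v₁₄ + v₃₄ - 2) * (v₁₂ + 1 / v₂₃ - 2) = 256) := by
  constructor
  · have h := aux_pos (-v₂₃) (-v₃₄) (-v₁₄) (-v₁₂)
      (by linarith) (by linarith) (by linarith) (by linarith)
    have e : (-v₂₃ + 1/(-v₃₄) + 2) * (1/(-v₁₄) + 1/(-v₁₂) + 2) * (-v₁₄ + -v₃₄ + 2) *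
        (-v₁₂ + 1/(-v₂₃) + 2)
        = (v₂₃ + 1 / v₃₄ - 2) * (1 / v₁₄ + 1 / v₁₂ - 2) *
          (v₁₄ + v₃₄ - 2) * (v₁₂ + 1 / v₂₃ - 2) := by
      rw [one_div_neg_eq_neg_one_div, one_div_neg_eq_neg_one_div, one_div_neg_eq_neg_one_div,
        one_div_neg_eq_neg_one_div]
      ring
    linarith [e ▸ h]
  · rintro rfl rfl rfl rfl
    norm_num
end

section
/- Let n₁₂, n₂₃, n₃₄, n₁₄ be integers ≥ 3, μ_{ij} = 4·cos²(π/n_{ij}), and let v₁₃, v₂₃, v₂₄, v₃₄, v₄₂ be negative reals. In ℝ⁴ set α_j = e_j* for j = 1, 2, 3, 4 (the coordinate functionals) and let v₁, v₂, v₃, v₄ be the columns of the matrix with rows (2, −μ₁₂, v₁₃, −μ₁₄), (−1, 2, v₂₃, v₂₄), (−1, μ₂₃/v₂₃, 2, v₃₄), (−1, v₄₂, μ₃₄/v₃₄, 2). Let W be the Coxeter group on four generators s₁, s₂, s₃, s₄ whose Coxeter matrix has m₁₂ = n₁₂, m₂₃ = n₂₃, m₃₄ = n₃₄, m₁₄ =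 n₁₄, and m₁₃ = m₂₄ = ∞. Then there exists a unique group homomorphism ρ : W → GL(4, ℝ) with ρ(s_j) = R_j for j = 1, 2, 3, 4, where R_j is the projective reflection associated with (α_j, v_j). -/
/-!
Write `r₁ z = z - f(z) • x` and `r₂ z = z - g(z) • y` with `f x = g y = 2`. Then `(r₁ r₂)^m` is
the identity plus two fixed rank-two maps whose coefficients are products of Chebyshev polynomials
`Sₖ` evaluated at `t = f(y) g(x) - 2` (`Module.reflection_mul_reflection_pow`). When
`f(y) g(x) = 4 cos²(π/n)` we have `t = 2 cos θ` with `θ = 2π/n`, and `S_{k-1}(2 cos θ) sin θ = sin kθ`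
shows that these coefficients vanish for `m = n`, so `(r₁ r₂)^n = 1`. Thus the reflections `Rⱼ`
satisfy every Coxeter relation (the entries `∞` impose none), and the universal property of the
Coxeter system yields `ρ`, unique because `W` is generated by the `sⱼ`.
-/

open Real Module Polynomial.Chebyshev

namespace Module

variable {V : Type*} [AddCommGroup V] [Module ℝ V] {x y : V} {f g : Dual ℝ V}

theorem reflection_mul_reflection_pow_eq_one (hf : f x = 2) (hg : g y = 2) {n : ℕ} (hn : 3 ≤ n)
    (hfg : f y * g x = 4 * cos (π / n) ^ 2) :
    (reflection hf * reflection hg) ^ n = 1 := by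
  have hn0 : (0 : ℝ) < n := by positivity
  set θ := 2 * π / n with hθ
  have ht : 2 * cos θ = f y * g x - 2 := by
    rw [hfg, show θ = 2 * (π / n) by ring, cos_two_mul]; ring
  have hsin : sin θ ≠ 0 := by
    refine (sin_pos_of_pos_of_lt_pi (by positivity) ?_).ne'
    rw [hθ, div_lt_iff₀ hn0]
    nlinarith [pi_pos, (show (3 : ℝ) ≤ n by exact_mod_cast hn)]
  have hS (k : ℤ) : (S ℝ (k - 1)).eval (2 * cos θ) * sin θ = sin (k * θ) := by simp
  apply LinearEquiv.toLinearMap_injective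
  rw [reflection_mul_reflection_pow hf hg n _ ht]
  -- Both coefficients contain the factor `S_{k-1}(t)` if `n = 2k`, and `S_k(t) + S_{k-1}(t)`
  -- if `n = 2k + 1`.
  obtain ⟨k, rfl | rfl⟩ := Nat.even_or_odd' n
  · have hk : (S ℝ (k - 1)).eval (2 * cos θ) = 0 := by
      have hkθ : ((k : ℤ) : ℝ) * θ = π := by
        have hk0 : (k : ℝ) ≠ 0 := by norm_cast; omega
        rw [hθ]; push_cast; field_simp
      have h := hS k
      rw [hkθ, sin_pi] at h
      exact (mul_eq_zero.mp h).resolve_right hsin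
    simp only [Nat.cast_mul, Nat.cast_ofNat, show (2 * (k : ℤ) - 2) / 2 = k - 1 by omega,
      show (2 * (k : ℤ) - 1) / 2 = k - 1 by omega, hk]
    simp
  · have hk : (S ℝ k).eval (2 * cos θ) + (S ℝ (k - 1)).eval (2 * cos θ) = 0 := by
      have hkθ : ((k + 1 : ℤ) : ℝ) * θ = 2 * π - (k : ℤ) * θ := by
        rw [hθ]; push_cast; field_simp; ring
      have h := congrArg₂ (· + ·) (hS (k + 1)) (hS k)
      rw [hkθ, sin_two_pi_sub, add_sub_cancel_right, neg_add_cancel, ← add_mul] at h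
      exact (mul_eq_zero.mp h).resolve_right hsin
    simp only [Nat.cast_add, Nat.cast_mul, Nat.cast_ofNat, Nat.cast_one,
      show (2 * (k : ℤ) + 1 - 2) / 2 = k - 1 by omega, show (2 * (k : ℤ) + 1 - 1) / 2 = k by omega,
      show (2 * (k : ℤ) + 1 - 3) / 2 = k - 1 by omega, show (2 * (k : ℤ) + 1) / 2 = k by omega, hk]
    simp

end Module

theorem CoxeterMatrix.isLiftable_reflection {B V : Type*} [AddCommGroup V] [Module ℝ V]
    (M : CoxeterMatrix B) {v : B → V} {α : B → Dual ℝ V} (hα : ∀ i, α i (v i) = 2)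
    (hM : ∀ i j, i ≠ j → M i j ≠ 0 →
      3 ≤ M i j ∧ α i (v j) * α j (v i) = 4 * cos (π / M i j) ^ 2) :
    M.IsLiftable fun i ↦ reflection (hα i) := by
  intro i j
  rcases eq_or_ne i j with rfl | hij
  · rw [M.diagonal, pow_one]
    exact mul_inv_cancel (reflection (hα i))
  rcases eq_or_ne (M i j) 0 with h0 | h0
  · rw [h0, pow_zero]
  obtain ⟨h3, hμ⟩ := hM i j hij h0
  exact reflection_mul_reflection_pow_eq_one _ _ h3 hμ

theorem CoxeterSystem.existsUnique_monoidHom_apply_simple {B W G : Type*} [Group W] [Monoid G]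
    {M : CoxeterMatrix B} (cs : CoxeterSystem M W) {f : B → G} (hf : M.IsLiftable f) :
    ∃! ρ : W →* G, ∀ i, ρ (cs.simple i) = f i :=
  ⟨cs.lift ⟨f, hf⟩, cs.lift_apply_simple hf,
    fun _ hρ ↦ cs.ext_simple fun i ↦ by rw [hρ, cs.lift_apply_simple]⟩

open Matrix

theorem stmt_16_general (n₁₂ n₂₃ n₃₄ n₁₄ : ℕ)
    (hn₁₂ : 3 ≤ n₁₂) (hn₂₃ : 3 ≤ n₂₃) (hn₃₄ : 3 ≤ n₃₄) (hn₁₄ : 3 ≤ n₁₄)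
    (μ₁₂ μ₂₃ μ₃₄ μ₁₄ : ℝ)
    (hμ₁₂ : μ₁₂ = 4 * Real.cos (Real.pi / n₁₂) ^ 2)
    (hμ₂₃ : μ₂₃ = 4 * Real.cos (Real.pi / n₂₃) ^ 2)
    (hμ₃₄ : μ₃₄ = 4 * Real.cos (Real.pi / n₃₄) ^ 2)
    (hμ₁₄ : μ₁₄ = 4 * Real.cos (Real.pi / n₁₄) ^ 2)
    (v₁₃ v₂₃ v₂₄ v₃₄ v₄₂ : ℝ)
    (hv₂₃ : v₂₃ < 0) (hv₃₄ : v₃₄ < 0)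
    (Mv : Matrix (Fin 4) (Fin 4) ℝ)
    (hMv : Mv = !![2, -μ₁₂, v₁₃, -μ₁₄;
                   -1, 2, v₂₃, v₂₄;
                   -1, μ₂₃ / v₂₃, 2, v₃₄;
                   -1, v₄₂, μ₃₄ / v₃₄, 2])
    (R : Fin 4 → ((Fin 4 → ℝ) ≃ₗ[ℝ] (Fin 4 → ℝ)))
    (hR : ∀ j x, R j x = x - x j • (Mvᵀ j))
    (M : CoxeterMatrix (Fin 4))
    (hM : M.M = !![1, n₁₂, 0, n₁₄; n₁₂, 1, n₂₃, 0; 0, n₂₃, 1, n₃₄; n₁₄, 0, n₃₄, 1])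
    {W : Type*} [Group W] (cs : CoxeterSystem M W) :
    ∃! ρ : W →* ((Fin 4 → ℝ) ≃ₗ[ℝ] (Fin 4 → ℝ)), ∀ j, ρ (cs.simple j) = R j := by
  have hdiag (i : Fin 4) : (LinearMap.proj i : Dual ℝ (Fin 4 → ℝ)) (Mvᵀ i) = 2 := by
    fin_cases i <;> simp [hMv]
  obtain rfl : R = fun i ↦ reflection (hdiag i) := by
    funext i; ext x : 1; simp [hR, reflection_apply]
  refine cs.existsUnique_monoidHom_apply_simple (M.isLiftable_reflection hdiag fun i j hij h0 ↦ ?_)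
  subst hMv hμ₁₂ hμ₂₃ hμ₃₄ hμ₁₄
  rw [hM] at h0 ⊢
  fin_cases i <;> fin_cases j <;> simp_all [mul_div_cancel₀, hv₂₃.ne, hv₃₄.ne]

/-- The general-position representation of the Coxeter group of the orbifold
`D²(; n₁₂, n₂₃, n₃₄, n₁₄) × ℝ`: with `αⱼ = eⱼ*` the coordinate functionals of ℝ⁴ and the
vectors `v₁, …, v₄` given by the columns of `Mv`, there is a unique group homomorphism
`ρ : W →* GL(ℝ⁴)` sending each Coxeter generator `sⱼ` to the projective reflection
`Rⱼ x = x - αⱼ(x) • vⱼ`. Here the Coxeter matrix entry `0` encodes `∞`. -/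
theorem stmt_16 (n₁₂ n₂₃ n₃₄ n₁₄ : ℕ)
    (hn₁₂ : 3 ≤ n₁₂) (hn₂₃ : 3 ≤ n₂₃) (hn₃₄ : 3 ≤ n₃₄) (hn₁₄ : 3 ≤ n₁₄)
    (μ₁₂ μ₂₃ μ₃₄ μ₁₄ : ℝ)
    (hμ₁₂ : μ₁₂ = 4 * Real.cos (Real.pi / n₁₂) ^ 2)
    (hμ₂₃ : μ₂₃ = 4 * Real.cos (Real.pi / n₂₃) ^ 2)
    (hμ₃₄ : μ₃₄ = 4 * Real.cos (Real.pi / n₃₄) ^ 2)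
    (hμ₁₄ : μ₁₄ = 4 * Real.cos (Real.pi / n₁₄) ^ 2)
    (v₁₃ v₂₃ v₂₄ v₃₄ v₄₂ : ℝ)
    (hv₁₃ : v₁₃ < 0) (hv₂₃ : v₂₃ < 0) (hv₂₄ : v₂₄ < 0) (hv₃₄ : v₃₄ < 0) (hv₄₂ : v₄₂ < 0)
    (Mv : Matrix (Fin 4) (Fin 4) ℝ)
    (hMv : Mv = !![2, -μ₁₂, v₁₃, -μ₁₄;
                   -1, 2, v₂₃, v₂₄;
                   -1, μ₂₃ / v₂₃, 2, v₃₄;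
                   -1, v₄₂, μ₃₄ / v₃₄, 2])
    (R : Fin 4 → ((Fin 4 → ℝ) ≃ₗ[ℝ] (Fin 4 → ℝ)))
    (hR : ∀ j x, R j x = x - x j • (Mvᵀ j))
    (M : CoxeterMatrix (Fin 4))
    (hM : M.M = !![1, n₁₂, 0, n₁₄; n₁₂, 1, n₂₃, 0; 0, n₂₃, 1, n₃₄; n₁₄, 0, n₃₄, 1])
    {W : Type*} [Group W] (cs : CoxeterSystem M W) :
    ∃! ρ : W →* ((Fin 4 → ℝ) ≃ₗ[ℝ] (Fin 4 → ℝ)), ∀ j, ρ (cs.simple j) = R j :=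
  stmt_16_general n₁₂ n₂₃ n₃₄ n₁₄ hn₁₂ hn₂₃ hn₃₄ hn₁₄ μ₁₂ μ₂₃ μ₃₄ μ₁₄ hμ₁₂ hμ₂₃ hμ₃₄ hμ₁₄ v₁₃ v₂₃
    v₂₄ v₃₄ v₄₂ hv₂₃ hv₃₄ Mv hMv R hR M hM cs
end
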